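/- Let R_B = ℤ[A_1, A_3, A_4, …, B_2, B_3, B_4, …]/I_ass and let F(u,v) = u + v + Σ_{i,j≥1} a_{i,j} u^i v^j be the Buchstaber formal group over R_B. Then F is a generating formal group over R_B, i.e. the subring of R_B generated by the coefficients a_{i,j} (i,j ≥ 1) is all of R_B. -/

import Mathlib

noncomputable section

/-- Index type for the variables `A₁, A₃, A₄, …` (left summand)
and `B₂, B₃, B₄, …` (right summand). -/
abbrev BVar : Type := {k : ℕ // k = 1 ∨ 3 ≤ k} ⊕ {k : ℕ // 2 ≤ k}

/-- The polynomial ring `ℤ[A₁, A₃, A₄, …, B₂, B₃, B₄, …]`. -/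
abbrev R0 : Type := MvPolynomial BVar ℤ

/-- The variable `A_k` (with the convention `A₀ = A₂ = 0`). -/
def Acoef (k : ℕ) : R0 := if h : k = 1 ∨ 3 ≤ k then MvPolynomial.X (Sum.inl ⟨k, h⟩) else 0

/-- The variable `B_k` (with the convention `B₀ = B₁ = 0`). -/
def Bcoef (k : ℕ) : R0 := if h : 2 ≤ k then MvPolynomial.X (Sum.inr ⟨k, h⟩) else 0

/-- The series `A(u) = 1 + Σ_{k ≥ 1} A_k u^k` (with `A₂ = 0`). -/
def Aser : PowerSeries R0 := PowerSeries.mk fun k => if k = 0 then 1 else Acoef k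

/-- The series `B(u) = 1 + Σ_{k ≥ 2} B_k u^k`. -/
def Bser : PowerSeries R0 := PowerSeries.mk fun k => if k = 0 then 1 else Bcoef k

/-- A one-variable power series `f`, viewed as a multivariable power series
in the single variable `i`:  `f(x_i)`. -/
def onVar {R : Type*} [CommRing R] {σ : Type*} [DecidableEq σ] (i : σ) (f : PowerSeries R) :
    MvPowerSeries σ R :=
  fun d => if d = Finsupp.single i (d i) then PowerSeries.coeff (d i) f else 0

/-- The denominator `u·B(v) − v·B(u)` of the Buchstaber formal group. -/
def buchDen {R : Type*} [CommRing R] (B : PowerSeries R) : MvPowerSeries (Fin 2) R :=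
  MvPowerSeries.X 0 * onVar 1 B - MvPowerSeries.X 1 * onVar 0 B

/-- The numerator `u²·A(v) − v²·A(u)` of the Buchstaber formal group. -/
def buchNum {R : Type*} [CommRing R] (A : PowerSeries R) : MvPowerSeries (Fin 2) R :=
  (MvPowerSeries.X 0) ^ 2 * onVar 1 A - (MvPowerSeries.X 1) ^ 2 * onVar 0 A

/-- The exponent vector of the monomial `u^i v^j`. -/
def ee (i j : ℕ) : Fin 2 →₀ ℕ := Finsupp.single 0 i + Finsupp.single 1 j

/-- Total degree of an exponent vector. -/
def degSum {σ : Type*} (d : σ →₀ ℕ) : ℕ := d.sum fun _ m => m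

/-- Substitution `F(x, y)` of two power series `x`, `y` in three variables, with zero
constant term, into a power series `F` in two variables: the coefficient of a monomial `d`
in `F(x,y)` is `Σ_{i,j} F_{i,j}·[d](x^i y^j)`, a finite sum since only `i + j ≤ |d|`
can contribute. -/
def subst2 {R : Type*} [CommRing R] (F : MvPowerSeries (Fin 2) R)
    (x y : MvPowerSeries (Fin 3) R) : MvPowerSeries (Fin 3) R :=
  fun d => ∑ p ∈ Finset.range (degSum d + 1) ×ˢ Finset.range (degSum d + 1),
    MvPowerSeries.coeff (ee p.1 p.2) F * MvPowerSeries.coeff d (x ^ p.1 * y ^ p.2)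

/-- The associativity defect `F(u, F(v,w)) − F(F(u,v), w)`. -/
def assocDefect {R : Type*} [CommRing R] (F : MvPowerSeries (Fin 2) R) :
    MvPowerSeries (Fin 3) R :=
  subst2 F (MvPowerSeries.X 0) (subst2 F (MvPowerSeries.X 1) (MvPowerSeries.X 2)) -
    subst2 F (subst2 F (MvPowerSeries.X 0) (MvPowerSeries.X 1)) (MvPowerSeries.X 2)

/-- The associativity ideal: the ideal generated by all coefficients of
`F(u, F(v,w)) − F(F(u,v), w)`. -/
def Iass {R : Type*} [CommRing R] (F : MvPowerSeries (Fin 2) R) : Ideal R :=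
  Ideal.span (Set.range fun d : Fin 3 →₀ ℕ => MvPowerSeries.coeff d (assocDefect F))

/-- The coefficient ring `R_B = ℤ[A₁, A₃, A₄, …, B₂, B₃, B₄, …]/I_ass` of the
Buchstaber formal group `F`. -/
abbrev RB (F : MvPowerSeries (Fin 2) R0) : Type := R0 ⧸ Iass F

/-- The coefficient `a_{i,j}` of the formal group `F`, in the quotient ring `RB F`. -/
def aB (F : MvPowerSeries (Fin 2) R0) (i j : ℕ) : RB F :=
  Ideal.Quotient.mk (Iass F) (MvPowerSeries.coeff (ee i j) F)

/-- The element `e_n = λ₁ a_{1,n} + λ₂ a_{2,n−1} + … + λ_n a_{n,1}` of `R_B`. -/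
def eElt (F : MvPowerSeries (Fin 2) R0) (lam : ℕ → ℕ → ℤ) (n : ℕ) : RB F :=
  ∑ i ∈ Finset.Icc 1 n, lam n i • aB F i (n + 1 - i)

/-- `d(n+1) = gcd(C(n+1,1), …, C(n+1,n))`. -/
def dBig (n : ℕ) : ℕ := (Finset.Icc 1 n).gcd fun i => (n + 1).choose i

/-!
Comparing the coefficients of `u⁰`, `u¹`, `u²` in
`F(u,v)·(u B(v) − v B(u)) = u² A(v) − v² A(u)` gives `F(0,v) = v`, then `a_{1,1} = A_1` and
`a_{1,n} = B_n` for `n ≥ 2`, and finally `A_{n+1} = Σ_k a_{1,n+1-k} B_k − a_{2,n}` for `n ≥ 2`.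
So every generator `A_k`, `B_k` of the polynomial ring is already a polynomial in the `a_{i,j}`
with `i, j ≥ 1` before any quotient is taken, and the quotient map is surjective.
-/

open MvPowerSeries

@[simp] lemma ee_apply_zero (i j : ℕ) : ee i j 0 = i := by simp [ee]

@[simp] lemma ee_apply_one (i j : ℕ) : ee i j 1 = j := by simp [ee]

lemma ee_sub_single_zero (i j k : ℕ) : ee i j - Finsupp.single 0 k = ee (i - k) j := by
  ext a; fin_cases a <;> simp [ee]

lemma ee_sub_single_one (i j k : ℕ) : ee i j - Finsupp.single 1 k = ee i (j - k) := by
  ext a; fin_cases a <;> simp [ee]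

lemma single_zero_le_ee_iff (i j k : ℕ) : Finsupp.single 0 k ≤ ee i j ↔ k ≤ i := by
  simp [Finsupp.single_le_iff]

lemma single_one_le_ee_iff (i j k : ℕ) : Finsupp.single 1 k ≤ ee i j ↔ k ≤ j := by
  simp [Finsupp.single_le_iff]

lemma ee_eq_single_one_iff (i j : ℕ) : ee i j = Finsupp.single 1 j ↔ i = 0 := by
  constructor
  · intro h; simpa using congrArg (· 0) h
  · rintro rfl; simp [ee]

lemma ee_eq_single_zero_iff (i j : ℕ) : ee i j = Finsupp.single 0 i ↔ j = 0 := by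
  constructor
  · intro h; simpa using congrArg (· 1) h
  · rintro rfl; simp [ee]

section Coefficients

variable {R : Type*} [CommRing R]

lemma coeff_onVar {σ : Type*} [DecidableEq σ] (i : σ) (f : PowerSeries R) (d : σ →₀ ℕ) :
    coeff d (onVar i f) = if d = Finsupp.single i (d i) then PowerSeries.coeff (d i) f else 0 :=
  rfl

lemma coeff_mul_onVar {σ : Type*} [DecidableEq σ] (φ : MvPowerSeries σ R) (i : σ)
    (f : PowerSeries R) (d : σ →₀ ℕ) :
    coeff d (φ * onVar i f) =
      ∑ k ∈ Finset.range (d i + 1),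
        coeff (d - Finsupp.single i k) φ * PowerSeries.coeff k f := by
  rw [coeff_mul]
  symm
  refine Finset.sum_of_injOn (fun k => (d - Finsupp.single i k, Finsupp.single i k)) ?_ ?_ ?_ ?_
  · intro k _ l _ h
    simpa using congrArg (fun p => p.2 i) h
  · intro k hk
    have : Finsupp.single i k ≤ d := by
      simpa [Finsupp.single_le_iff, Nat.lt_succ_iff] using hk
    simp [tsub_add_cancel_of_le this]
  · rintro ⟨p, q⟩ hpq hnot
    rw [Finset.HasAntidiagonal.mem_antidiagonal] at hpq
    rw [coeff_onVar, if_neg, mul_zero]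
    intro hq
    refine hnot ⟨q i, ?_, ?_⟩
    · have : q i ≤ d i := by rw [← hpq]; simp
      simpa [Nat.lt_succ_iff] using this
    · simp only [← hq, ← hpq, add_tsub_cancel_right]
  · intro k _
    simp [coeff_onVar]

lemma coeff_ee_X_zero_pow_mul (k : ℕ) (ψ : MvPowerSeries (Fin 2) R) (i j : ℕ) :
    coeff (ee i j) (X 0 ^ k * ψ) = if k ≤ i then coeff (ee (i - k) j) ψ else 0 := by
  simp only [X_pow_eq, coeff_monomial_mul, single_zero_le_ee_iff, ee_sub_single_zero, one_mul]

lemma coeff_ee_X_one_pow_mul (k : ℕ) (ψ : MvPowerSeries (Fin 2) R) (i j : ℕ) :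
    coeff (ee i j) (X 1 ^ k * ψ) = if k ≤ j then coeff (ee i (j - k)) ψ else 0 := by
  simp only [X_pow_eq, coeff_monomial_mul, single_one_le_ee_iff, ee_sub_single_one, one_mul]

lemma coeff_ee_onVar_zero (f : PowerSeries R) (i j : ℕ) :
    coeff (ee i j) (onVar 0 f) = if j = 0 then PowerSeries.coeff i f else 0 := by
  simp only [coeff_onVar, ee_apply_zero, ee_eq_single_zero_iff]

lemma coeff_ee_onVar_one (f : PowerSeries R) (i j : ℕ) :
    coeff (ee i j) (onVar 1 f) = if i = 0 then PowerSeries.coeff j f else 0 := by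
  simp only [coeff_onVar, ee_apply_one, ee_eq_single_one_iff]

lemma coeff_ee_buchNum (A : PowerSeries R) (i j : ℕ) :
    coeff (ee i j) (buchNum A) =
      (if i = 2 then PowerSeries.coeff j A else 0) -
        (if j = 2 then PowerSeries.coeff i A else 0) := by
  rw [buchNum, map_sub, coeff_ee_X_zero_pow_mul, coeff_ee_X_one_pow_mul, coeff_ee_onVar_zero,
    coeff_ee_onVar_one]
  congr 1 <;> split_ifs <;> first | rfl | omega

lemma coeff_ee_mul_buchDen (φ : MvPowerSeries (Fin 2) R) (B : PowerSeries R) (i j : ℕ) :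
    coeff (ee i j) (φ * buchDen B) =
      (if 1 ≤ i then
        ∑ k ∈ Finset.range (j + 1), coeff (ee (i - 1) (j - k)) φ * PowerSeries.coeff k B
      else 0) -
      (if 1 ≤ j then
        ∑ k ∈ Finset.range (i + 1), coeff (ee (i - k) (j - 1)) φ * PowerSeries.coeff k B
      else 0) := by
  have : φ * buchDen B = X 0 ^ 1 * (φ * onVar 1 B) - X 1 ^ 1 * (φ * onVar 0 B) := by
    rw [buchDen]; ring
  rw [this, map_sub, coeff_ee_X_zero_pow_mul, coeff_ee_X_one_pow_mul, coeff_mul_onVar,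
    coeff_mul_onVar]
  simp only [ee_apply_zero, ee_apply_one, ee_sub_single_zero, ee_sub_single_one]

end Coefficients

lemma coeff_Bser (k : ℕ) : PowerSeries.coeff k Bser = if k = 0 then 1 else Bcoef k := by
  simp [Bser]

@[simp] lemma constantCoeff_Bser : PowerSeries.constantCoeff Bser = 1 := by
  simp [← PowerSeries.coeff_zero_eq_constantCoeff_apply, coeff_Bser]

@[simp] lemma coeff_one_Bser : PowerSeries.coeff 1 Bser = 0 := by
  simp [coeff_Bser, Bcoef]

lemma coeff_Aser (k : ℕ) : PowerSeries.coeff k Aser = if k = 0 then 1 else Acoef k := by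
  simp [Aser]

section BuchstaberCoefficients

variable {F : MvPowerSeries (Fin 2) R0}

lemma coeff_ee_zero_of_mul_buchDen_eq (hF : F * buchDen Bser = buchNum Aser) (k : ℕ) :
    coeff (ee 0 k) F = if k = 1 then 1 else 0 := by
  have h := congrArg (coeff (ee 0 (k + 1))) hF
  simpa [coeff_ee_mul_buchDen, coeff_ee_buchNum, coeff_Aser, coeff_Bser] using h

lemma coeff_ee_one_of_mul_buchDen_eq (hF : F * buchDen Bser = buchNum Aser) (n : ℕ) :
    coeff (ee 1 n) F = PowerSeries.coeff n Bser + if n = 1 then Acoef 1 else 0 := by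
  have h := congrArg (coeff (ee 1 (n + 1))) hF
  have hsum :
      ∑ k ∈ Finset.range (n + 2), coeff (ee 0 (n + 1 - k)) F * PowerSeries.coeff k Bser =
        PowerSeries.coeff n Bser := by
    rw [Finset.sum_eq_single n]
    · simp [coeff_ee_zero_of_mul_buchDen_eq hF]
    · intro k _ hk
      simp [coeff_ee_zero_of_mul_buchDen_eq hF, show n + 1 - k ≠ 1 by omega]
    · simp
  simp [coeff_ee_mul_buchDen, coeff_ee_buchNum, coeff_Aser, Finset.sum_range_succ, hsum] at h
  linear_combination -h

lemma Acoef_succ_of_mul_buchDen_eq (hF : F * buchDen Bser = buchNum Aser) {n : ℕ} (hn : 2 ≤ n) :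
    Acoef (n + 1) =
      ∑ k ∈ Finset.range (n + 2), coeff (ee 1 (n + 1 - k)) F * PowerSeries.coeff k Bser -
        coeff (ee 2 n) F := by
  have h := congrArg (coeff (ee 2 (n + 1))) hF
  have hright :
      ∑ k ∈ Finset.range (2 + 1), coeff (ee (2 - k) (n + 1 - 1)) F * PowerSeries.coeff k Bser =
        coeff (ee 2 n) F := by
    simp [Finset.sum_range_succ, coeff_ee_zero_of_mul_buchDen_eq hF]
    omega
  rw [coeff_ee_mul_buchDen, coeff_ee_buchNum, hright] at h
  simp [coeff_Aser, show n ≠ 1 by omega] at h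
  exact h.symm

end BuchstaberCoefficients

def mixedCoeffs {R : Type*} [CommRing R] (F : MvPowerSeries (Fin 2) R) : Set R :=
  {x | ∃ i j : ℕ, 1 ≤ i ∧ 1 ≤ j ∧ x = coeff (ee i j) F}

section Generation

variable {F : MvPowerSeries (Fin 2) R0}

lemma coeff_ee_mem_closure_mixedCoeffs {i j : ℕ} (hi : 1 ≤ i) (hj : 1 ≤ j) :
    coeff (ee i j) F ∈ Subring.closure (mixedCoeffs F) :=
  Subring.subset_closure ⟨i, j, hi, hj, rfl⟩

lemma Bcoef_mem_closure_mixedCoeffs (hF : F * buchDen Bser = buchNum Aser) (k : ℕ) :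
    Bcoef k ∈ Subring.closure (mixedCoeffs F) := by
  rcases lt_or_ge k 2 with hk | hk
  · simp [Bcoef, hk.not_ge]
  · have h := coeff_ee_one_of_mul_buchDen_eq hF k
    rw [coeff_Bser, if_neg (by omega), if_neg (by omega), add_zero] at h
    exact h ▸ coeff_ee_mem_closure_mixedCoeffs le_rfl (by omega)

lemma coeff_Bser_mem_closure_mixedCoeffs (hF : F * buchDen Bser = buchNum Aser) (k : ℕ) :
    PowerSeries.coeff k Bser ∈ Subring.closure (mixedCoeffs F) := by
  rw [coeff_Bser]
  split_ifs
  · exact one_mem _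
  · exact Bcoef_mem_closure_mixedCoeffs hF k

lemma coeff_ee_one_mem_closure_mixedCoeffs (hF : F * buchDen Bser = buchNum Aser) (n : ℕ) :
    coeff (ee 1 n) F ∈ Subring.closure (mixedCoeffs F) := by
  rcases Nat.eq_zero_or_pos n with rfl | hn
  · simp [coeff_ee_one_of_mul_buchDen_eq hF]
  · exact coeff_ee_mem_closure_mixedCoeffs le_rfl hn

lemma Acoef_mem_closure_mixedCoeffs (hF : F * buchDen Bser = buchNum Aser) (k : ℕ) :
    Acoef k ∈ Subring.closure (mixedCoeffs F) := by
  rcases lt_or_ge k 3 with hk | hk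
  · interval_cases k
    · simp [Acoef]
    · have h := coeff_ee_one_of_mul_buchDen_eq hF 1
      simp only [coeff_one_Bser, if_pos, zero_add] at h
      exact h ▸ coeff_ee_mem_closure_mixedCoeffs le_rfl le_rfl
    · simp [Acoef]
  · obtain ⟨n, rfl⟩ : ∃ n, k = n + 1 := ⟨k - 1, by omega⟩
    rw [Acoef_succ_of_mul_buchDen_eq hF (by omega)]
    refine sub_mem (sum_mem fun j _ => mul_mem ?_ ?_)
      (coeff_ee_mem_closure_mixedCoeffs (by omega) (by omega))
    · exact coeff_ee_one_mem_closure_mixedCoeffs hF _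
    · exact coeff_Bser_mem_closure_mixedCoeffs hF j

lemma MvPolynomial.subring_eq_top_of_X_mem {σ : Type*} {S : Subring (MvPolynomial σ ℤ)}
    (hX : ∀ i, MvPolynomial.X i ∈ S) : S = ⊤ := by
  refine (Subring.eq_top_iff' S).mpr fun p => ?_
  induction p using MvPolynomial.induction_on with
  | C a => simp [intCast_mem]
  | add p q hp hq => exact add_mem hp hq
  | mul_X p i hp => exact mul_mem hp (hX i)

lemma closure_mixedCoeffs_eq_top (hF : F * buchDen Bser = buchNum Aser) :
    Subring.closure (mixedCoeffs F) = ⊤ := by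
  refine MvPolynomial.subring_eq_top_of_X_mem fun v => ?_
  rcases v with ⟨k, hk⟩ | ⟨k, hk⟩
  · simpa [Acoef, hk] using Acoef_mem_closure_mixedCoeffs hF k
  · simpa [Bcoef, hk] using Bcoef_mem_closure_mixedCoeffs hF k

end Generation

lemma Subring.closure_image_eq_top_of_surjective {R S : Type*} [Ring R] [Ring S] {f : R →+* S}
    (hf : Function.Surjective f) {s : Set R} (hs : Subring.closure s = ⊤) :
    Subring.closure (f '' s) = ⊤ := by
  rw [← RingHom.map_closure, hs, ← RingHom.range_eq_map, RingHom.range_eq_top.mpr hf]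

/-- The Buchstaber formal group is a generating formal group over `R_B`: the subring of
`R_B` generated by the coefficients `a_{i,j}` (`i, j ≥ 1`) is all of `R_B`. -/
theorem statement2 (F : MvPowerSeries (Fin 2) R0) (hF : F * buchDen Bser = buchNum Aser) :
    Subring.closure {x : RB F | ∃ i j : ℕ, 1 ≤ i ∧ 1 ≤ j ∧ x = aB F i j} = ⊤ := by
  have himage : {x : RB F | ∃ i j : ℕ, 1 ≤ i ∧ 1 ≤ j ∧ x = aB F i j} =
      Ideal.Quotient.mk (Iass F) '' mixedCoeffs F := by
    ext x
    constructor
    · rintro ⟨i, j, hi, hj, rfl⟩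
      exact ⟨_, ⟨i, j, hi, hj, rfl⟩, rfl⟩
    · rintro ⟨_, ⟨i, j, hi, hj, rfl⟩, rfl⟩
      exact ⟨i, j, hi, hj, rfl⟩
  rw [himage]
  exact Subring.closure_image_eq_top_of_surjective Ideal.Quotient.mk_surjective
    (closure_mixedCoeffs_eq_top hF)

end
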